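/- Let E be an exact couple system over a bounded poset I, and for p ∈ I let Q_p := D_∞ / ker(j_{∞,p} : D_∞ → E^∞_p). Then: (a) the map Q_p → S^{∞,−∞}_{∞,p} sending the coset of w ∈ D_∞ to the class of j_{∞,p}(w) is a well-defined isomorphism; (b) for q ≤ p one has ker(j_{∞,q}) ⊆ ker(j_{∞,p}), so the identity of D_∞ induces a surjection Q_q → Q_p; the map ℓ : E^p_q → E^∞_q induces an injective homomorphism S^{p,−∞}_{∞,q} → S^{∞,−∞}_{∞,q} whose image corresponds, under the isomorphism of (a) for Q_q, to ker(Q_q → Q_p); consequently S^{p,−∞}_{∞,q} ≅ ker(Q_q → Q_p). -/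

import Mathlib

open Function

universe u v

/-- An exact couple system over a bounded poset `I`: abelian groups `E^p_q` for `q ≤ p`,
functorial maps `ℓ`, boundary maps `k_{pq} : E^p_q → D_q` (where `D_p := E^p_⊥`), exact
triangles `D_q → D_p → E^p_q → D_q`, and naturality of `k`. -/
structure ExactCoupleSystem (I : Type u) [PartialOrder I] [BoundedOrder I] where
  /-- the abelian groups `E^p_q` -/
  E : ∀ p q : I, q ≤ p → AddCommGrpCat.{v}
  /-- the structure maps `ℓ : E^p_q → E^{p'}_{q'}` for `p ≤ p'`, `q ≤ q'` -/
  l : ∀ {p q p' q' : I} (h : q ≤ p) (h' : q' ≤ p'), p ≤ p' → q ≤ q' →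
      (E p q h →+ E p' q' h')
  /-- the boundary maps `k_{pq} : E^p_q → D_q` -/
  k : ∀ {p q : I} (h : q ≤ p), (E p q h →+ E q ⊥ bot_le)
  l_id : ∀ {p q : I} (h : q ≤ p), l h h le_rfl le_rfl = AddMonoidHom.id _
  l_comp : ∀ {p q p' q' p'' q'' : I} (h : q ≤ p) (h' : q' ≤ p') (h'' : q'' ≤ p'')
      (hp : p ≤ p') (hq : q ≤ q') (hp' : p' ≤ p'') (hq' : q' ≤ q''),
      (l h' h'' hp' hq').comp (l h h' hp hq) = l h h'' (hp.trans hp') (hq.trans hq')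
  exact_ij : ∀ {p q : I} (h : q ≤ p),
      (l (bot_le : (⊥ : I) ≤ q) (bot_le : (⊥ : I) ≤ p) h le_rfl).range =
        (l (bot_le : (⊥ : I) ≤ p) h le_rfl bot_le).ker
  exact_jk : ∀ {p q : I} (h : q ≤ p),
      (l (bot_le : (⊥ : I) ≤ p) h le_rfl bot_le).range = (k h).ker
  exact_ki : ∀ {p q : I} (h : q ≤ p),
      (k h).range = (l (bot_le : (⊥ : I) ≤ q) (bot_le : (⊥ : I) ≤ p) h le_rfl).ker
  k_nat : ∀ {p q p' q' : I} (h : q ≤ p) (h' : q' ≤ p') (hp : p ≤ p') (hq : q ≤ q'),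
      (l (bot_le : (⊥ : I) ≤ q) (bot_le : (⊥ : I) ≤ q') hq le_rfl).comp (k h) =
        (k h').comp (l h h' hp hq)

namespace ExactCoupleSystem

variable {I : Type u} [PartialOrder I] [BoundedOrder I] (X : ExactCoupleSystem.{u, v} I)

/-- `D_p := E^p_{−∞}`. -/
abbrev D (p : I) := X.E p ⊥ bot_le

/-- `i_{qp} : D_q → D_p`. -/
def i {q p : I} (h : q ≤ p) : X.D q →+ X.D p := X.l bot_le bot_le h le_rfl

/-- `j_{pq} : D_p → E^p_q`. -/
def j {q p : I} (h : q ≤ p) : X.D p →+ X.E p q h := X.l bot_le h le_rfl bot_le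

/-- The differential `d_{pqz} = j_{qz} ∘ k_{pq} : E^p_q → E^q_z`. -/
def dd {z q p : I} (hzq : z ≤ q) (hqp : q ≤ p) : X.E p q hqp →+ X.E q z hzq :=
  (X.j hzq).comp (X.k hqp)

/-- The S-term `S^{pz}_{bq} = ker(d_{pqz}) / im(d_{bpq})` of an exact couple system. -/
abbrev Sterm {z q p b : I} (hzq : z ≤ q) (hqp : q ≤ p) (hpb : p ≤ b) :=
  ↥(X.dd hzq hqp).ker ⧸ (X.dd hqp hpb).range.addSubgroupOf (X.dd hzq hqp).ker

/-- The class in `S^{pz}_{bq}` of an element `x ∈ ker(d_{pqz})`. -/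
def Scls {z q p b : I} (hzq : z ≤ q) (hqp : q ≤ p) (hpb : p ≤ b)
    {x : X.E p q hqp} (hx : x ∈ (X.dd hzq hqp).ker) : X.Sterm hzq hqp hpb :=
  QuotientAddGroup.mk ⟨x, hx⟩

end ExactCoupleSystem

/-!
Everything is a diagram chase in the exact triangles. Since `k_{bb} = 0`, the differential
`d_{bbp}` vanishes, so `S^{b⊥}_{bp} = ker k_{bp} = im j_{bp} ≅ D_b / ker j_{bp} = Q_p`.
For `q ≤ p ≤ b`, every class of `S^{p⊥}_{bq}` is `[j_{pq} w]`, and `ℓ` sends it to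
`[j_{bq} (i_{pb} w)]`, the image of the coset of `i_{pb} w` in `Q_q`; these cosets make up
`ker (Q_q → Q_p)` because `ker j_{bp} = im i_{pb}`. For injectivity, if `j_{bq} (i_{pb} w) = 0`
then `i_{pb} w = i_{qb} v`, so `w - i_{qp} v = k_{bp} e` and `j_{pq} w = d_{bpq} e`.
-/

theorem AddMonoidHom.nonempty_addEquiv_of_range_eq_map {A B C : Type*} [AddGroup A]
    [AddGroup B] [AddGroup C] {τ : A →+ B} (hτ : Injective τ) {φ : C →+ B}
    (hφ : Injective φ) {K : AddSubgroup C} (h : τ.range = K.map φ) : Nonempty (A ≃+ K) :=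
  ⟨(AddMonoidHom.ofInjective hτ).trans
    ((AddEquiv.addSubgroupCongr h).trans (K.equivMapOfInjective φ hφ).symm)⟩

namespace ExactCoupleSystem

variable {I : Type u} [PartialOrder I] [BoundedOrder I] (X : ExactCoupleSystem.{u, v} I)

section Triangle

variable {q p : I} (h : q ≤ p)

lemma l_l_apply {p' q' p'' q'' : I} (h' : q' ≤ p') (h'' : q'' ≤ p'') (hp : p ≤ p')
    (hq : q ≤ q') (hp' : p' ≤ p'') (hq' : q' ≤ q'') (x : X.E p q h) :
    X.l h' h'' hp' hq' (X.l h h' hp hq x) = X.l h h'' (hp.trans hp') (hq.trans hq') x :=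
  DFunLike.congr_fun (X.l_comp h h' h'' hp hq hp' hq') x

lemma range_i : (X.i h).range = (X.j h).ker := X.exact_ij h

lemma range_j : (X.j h).range = (X.k h).ker := X.exact_jk h

lemma range_k : (X.k h).range = (X.i h).ker := X.exact_ki h

@[simp]
lemma j_i_apply (v : X.D q) : X.j h (X.i h v) = 0 := by
  rw [← AddMonoidHom.mem_ker, ← X.range_i]
  exact ⟨v, rfl⟩

@[simp]
lemma k_j_apply (w : X.D p) : X.k h (X.j h w) = 0 := by
  rw [← AddMonoidHom.mem_ker, ← X.range_j]
  exact ⟨w, rfl⟩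

@[simp]
lemma i_k_apply (x : X.E p q h) : X.i h (X.k h x) = 0 := by
  rw [← AddMonoidHom.mem_ker, ← X.range_k]
  exact ⟨x, rfl⟩

@[simp]
lemma j_bot_apply (w : X.D p) : X.j (bot_le : ⊥ ≤ p) w = w :=
  DFunLike.congr_fun (X.l_id (bot_le : ⊥ ≤ p)) w

@[simp]
lemma i_refl_apply (w : X.D p) : X.i (le_refl p) w = w :=
  DFunLike.congr_fun (X.l_id (bot_le : ⊥ ≤ p)) w

lemma i_i_apply {b : I} (hpb : p ≤ b) (v : X.D q) : X.i hpb (X.i h v) = X.i (h.trans hpb) v :=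
  X.l_l_apply bot_le bot_le bot_le h le_rfl hpb le_rfl v

@[simp]
lemma k_refl_apply (x : X.E p p le_rfl) : X.k (le_refl p) x = 0 := by
  simpa only [i_refl_apply] using X.i_k_apply (le_refl p) x

lemma l_j_apply {p' q' : I} (h' : q' ≤ p') (hp : p ≤ p') (hq : q ≤ q') (w : X.D p) :
    X.l h h' hp hq (X.j h w) = X.j h' (X.i hp w) :=
  (X.l_l_apply bot_le h h' le_rfl bot_le hp hq w).trans
    (X.l_l_apply bot_le bot_le h' hp le_rfl le_rfl bot_le w).symm

lemma k_l_apply {p' q' : I} (h' : q' ≤ p') (hp : p ≤ p') (hq : q ≤ q') (x : X.E p q h) :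
    X.k h' (X.l h h' hp hq x) = X.i hq (X.k h x) :=
  (DFunLike.congr_fun (X.k_nat h h' hp hq) x).symm

lemma ker_j_le_ker_j {b : I} (hpb : p ≤ b) : (X.j (h.trans hpb)).ker ≤ (X.j hpb).ker := by
  intro w hw
  rw [AddMonoidHom.mem_ker] at hw ⊢
  calc X.j hpb w = X.l (h.trans hpb) hpb le_rfl h (X.j (h.trans hpb) w) :=
        (X.l_l_apply bot_le (h.trans hpb) hpb le_rfl bot_le le_rfl h w).symm
    _ = 0 := by rw [hw, map_zero]

end Triangle

section Differential

lemma dd_bot_apply {q p : I} (hqp : q ≤ p) (x : X.E p q hqp) :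
    X.dd (bot_le : ⊥ ≤ q) hqp x = X.k hqp x :=
  X.j_bot_apply _

lemma dd_refl {z q : I} (hzq : z ≤ q) : X.dd hzq (le_refl q) = 0 := by
  ext x
  simp [dd]

lemma l_dd_apply {z q p z' q' p' : I} (hzq : z ≤ q) (hqp : q ≤ p) (hzq' : z' ≤ q')
    (hqp' : q' ≤ p') (hz : z ≤ z') (hq : q ≤ q') (hp : p ≤ p') (x : X.E p q hqp) :
    X.l hzq hzq' hq hz (X.dd hzq hqp x) = X.dd hzq' hqp' (X.l hqp hqp' hp hq x) := by
  simp only [dd, AddMonoidHom.comp_apply, l_j_apply, k_l_apply]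

end Differential

section Functoriality

variable {z q p b z' q' p' b' : I}

def Smap (hzq : z ≤ q) (hqp : q ≤ p) (hpb : p ≤ b) (hzq' : z' ≤ q') (hqp' : q' ≤ p')
    (hpb' : p' ≤ b') (hz : z ≤ z') (hq : q ≤ q') (hp : p ≤ p') (hb : b ≤ b') :
    X.Sterm hzq hqp hpb →+ X.Sterm hzq' hqp' hpb' :=
  QuotientAddGroup.map _ _
    (((X.l hqp hqp' hp hq).comp (X.dd hzq hqp).ker.subtype).codRestrict _ fun x => by
      rw [AddMonoidHom.mem_ker, AddMonoidHom.comp_apply,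
        ← X.l_dd_apply hzq hqp hzq' hqp' hz hq hp, AddSubgroup.coe_subtype, x.2, map_zero])
    (by
      intro x hx
      obtain ⟨e, he⟩ := AddSubgroup.mem_addSubgroupOf.mp hx
      refine AddSubgroup.mem_addSubgroupOf.mpr
        (AddMonoidHom.mem_range.mpr ⟨X.l hpb hpb' hb hp e, ?_⟩)
      simp only [AddMonoidHom.codRestrict_apply, AddMonoidHom.comp_apply,
        AddSubgroup.coe_subtype, ← he, X.l_dd_apply hqp hpb hqp' hpb' hq hp hb])

end Functoriality

section Classes

variable {q p b : I}

lemma j_mem_ker_dd (hqp : q ≤ p) (w : X.D p) :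
    X.j hqp w ∈ (X.dd (bot_le : ⊥ ≤ q) hqp).ker := by
  rw [AddMonoidHom.mem_ker, dd_bot_apply, k_j_apply]

def toS (hqp : q ≤ p) (hpb : p ≤ b) : X.D p →+ X.Sterm (bot_le : ⊥ ≤ q) hqp hpb :=
  (QuotientAddGroup.mk' _).comp ((X.j hqp).codRestrict _ (X.j_mem_ker_dd hqp))

lemma toS_surjective (hqp : q ≤ p) (hpb : p ≤ b) : Surjective (X.toS hqp hpb) := by
  intro s
  obtain ⟨⟨x, hx⟩, rfl⟩ := QuotientAddGroup.mk_surjective s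
  rw [AddMonoidHom.mem_ker, dd_bot_apply, ← AddMonoidHom.mem_ker, ← range_j] at hx
  obtain ⟨w, rfl⟩ := hx
  exact ⟨w, rfl⟩

lemma toS_eq_zero_iff (hqp : q ≤ p) (hpb : p ≤ b) (w : X.D p) :
    X.toS hqp hpb w = 0 ↔ X.j hqp w ∈ (X.dd hqp hpb).range :=
  (QuotientAddGroup.eq_zero_iff _).trans AddSubgroup.mem_addSubgroupOf

lemma ker_toS_refl (hqp : q ≤ p) : (X.toS hqp le_rfl).ker = (X.j hqp).ker := by
  ext w
  rw [AddMonoidHom.mem_ker, toS_eq_zero_iff, dd_refl, AddMonoidHom.range_zero,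
    AddSubgroup.mem_bot, AddMonoidHom.mem_ker]

noncomputable def quotEquivS (hpb : p ≤ b) :
    X.D b ⧸ (X.j hpb).ker ≃+ X.Sterm bot_le hpb le_rfl :=
  (QuotientAddGroup.quotientAddEquivOfEq (X.ker_toS_refl hpb).symm).trans
    (QuotientAddGroup.quotientKerEquivOfSurjective _ (X.toS_surjective hpb le_rfl))

lemma quotEquivS_mk (hpb : p ≤ b) (w : X.D b) :
    X.quotEquivS hpb (QuotientAddGroup.mk w) = X.toS hpb le_rfl w :=
  rfl

end Classes

section Filtration

variable {q p b : I} (hqp : q ≤ p) (hpb : p ≤ b)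

noncomputable def quotMap : X.D b ⧸ (X.j (hqp.trans hpb)).ker →+ X.D b ⧸ (X.j hpb).ker :=
  QuotientAddGroup.map _ _ (AddMonoidHom.id _)
    fun _ hw => X.ker_j_le_ker_j hqp hpb hw

lemma quotMap_mk (w : X.D b) :
    X.quotMap hqp hpb (QuotientAddGroup.mk w) = QuotientAddGroup.mk w :=
  rfl

lemma quotMap_surjective : Surjective (X.quotMap hqp hpb) :=
  QuotientAddGroup.map_surjective_of_surjective _ _ _ QuotientAddGroup.mk_surjective _

lemma ker_quotMap :
    (X.quotMap hqp hpb).ker = ((QuotientAddGroup.mk' _).comp (X.i hpb)).range :=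
  (QuotientAddGroup.ker_map _ _ _ _).trans <| by
    rw [AddSubgroup.comap_id, ← X.range_i hpb, AddMonoidHom.range_comp]

def sIncl :
    X.Sterm (bot_le : ⊥ ≤ q) hqp hpb →+ X.Sterm (bot_le : ⊥ ≤ q) (hqp.trans hpb) le_rfl :=
  X.Smap bot_le hqp hpb bot_le (hqp.trans hpb) le_rfl le_rfl le_rfl hpb le_rfl

lemma sIncl_toS (w : X.D p) :
    X.sIncl hqp hpb (X.toS hqp hpb w) = X.toS (hqp.trans hpb) le_rfl (X.i hpb w) :=
  congrArg QuotientAddGroup.mk (Subtype.ext (X.l_j_apply hqp (hqp.trans hpb) hpb le_rfl w))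

lemma sIncl_Scls {x : X.E p q hqp} (hx : x ∈ (X.dd (bot_le : ⊥ ≤ q) hqp).ker)
    (hx' : X.l hqp (hqp.trans hpb) hpb le_rfl x ∈
      (X.dd (bot_le : ⊥ ≤ q) (hqp.trans hpb)).ker) :
    X.sIncl hqp hpb (X.Scls bot_le hqp hpb hx) = X.Scls bot_le (hqp.trans hpb) le_rfl hx' :=
  rfl

lemma j_mem_range_dd_of_j_i_eq_zero {w : X.D p} (hw : X.j (hqp.trans hpb) (X.i hpb w) = 0) :
    X.j hqp w ∈ (X.dd hqp hpb).range := by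
  obtain ⟨v, hv⟩ : X.i hpb w ∈ (X.i (hqp.trans hpb)).range := by rwa [range_i]
  obtain ⟨e, he⟩ : w - X.i hqp v ∈ (X.k hpb).range := by
    rw [range_k, AddMonoidHom.mem_ker, map_sub, i_i_apply, hv, sub_self]
  refine ⟨e, ?_⟩
  rw [dd, AddMonoidHom.comp_apply, he, map_sub, j_i_apply, sub_zero]

lemma sIncl_injective : Injective (X.sIncl hqp hpb) := by
  rw [injective_iff_map_eq_zero]
  intro s hs
  obtain ⟨w, rfl⟩ := X.toS_surjective hqp hpb s
  rw [sIncl_toS, ← AddMonoidHom.mem_ker, ker_toS_refl, AddMonoidHom.mem_ker] at hs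
  exact (X.toS_eq_zero_iff hqp hpb w).mpr (X.j_mem_range_dd_of_j_i_eq_zero hqp hpb hs)

lemma range_sIncl :
    (X.sIncl hqp hpb).range =
      (X.quotMap hqp hpb).ker.map (X.quotEquivS (hqp.trans hpb)).toAddMonoidHom := by
  have hcomm : (X.sIncl hqp hpb).comp (X.toS hqp hpb) =
      (X.quotEquivS (hqp.trans hpb)).toAddMonoidHom.comp
        ((QuotientAddGroup.mk' _).comp (X.i hpb)) :=
    AddMonoidHom.ext (X.sIncl_toS hqp hpb)
  rw [ker_quotMap, ← AddMonoidHom.range_comp, ← hcomm, AddMonoidHom.range_comp,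
    AddMonoidHom.range_eq_top_of_surjective _ (X.toS_surjective hqp hpb),
    ← AddMonoidHom.range_eq_map]

end Filtration

end ExactCoupleSystem

/-- ∞-page as quotient kernels: with `Q_p := D_∞/ker(j_{∞,p})`:
(a) the coset of `w` ↦ class of `j_{∞,p}(w)` is a well-defined isomorphism
`Q_p ≅ S^{∞,−∞}_{∞,p}`; (b) for `q ≤ p`, `ker(j_{∞,q}) ⊆ ker(j_{∞,p})`, the identity of
`D_∞` induces a surjection `Q_q → Q_p`, and `ℓ` induces an injection
`S^{p,−∞}_{∞,q} → S^{∞,−∞}_{∞,q}` whose image corresponds to `ker(Q_q → Q_p)` under the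
isomorphism of (a); hence `S^{p,−∞}_{∞,q} ≅ ker(Q_q → Q_p)`. -/
theorem statement15 {I : Type u} [PartialOrder I] [BoundedOrder I]
    (X : ExactCoupleSystem.{u, v} I) {q p : I} (hqp : q ≤ p) :
    (∃ φ : (X.D ⊤ ⧸ (X.j (le_top : p ≤ ⊤)).ker) →+
        X.Sterm (bot_le : (⊥ : I) ≤ p) (le_top : p ≤ ⊤) (le_refl (⊤ : I)),
      (∀ (w : X.D ⊤)
        (hkw : X.j (le_top : p ≤ ⊤) w ∈ (X.dd (bot_le : (⊥ : I) ≤ p) le_top).ker),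
        φ (QuotientAddGroup.mk w) =
          X.Scls (bot_le : (⊥ : I) ≤ p) (le_top : p ≤ ⊤) (le_refl (⊤ : I)) hkw) ∧
      Bijective φ) ∧
    (X.j (le_top : q ≤ ⊤)).ker ≤ (X.j (le_top : p ≤ ⊤)).ker ∧
    ∃ (φq : (X.D ⊤ ⧸ (X.j (le_top : q ≤ ⊤)).ker) →+
        X.Sterm (bot_le : (⊥ : I) ≤ q) (le_top : q ≤ ⊤) (le_refl (⊤ : I)))
      (σ : (X.D ⊤ ⧸ (X.j (le_top : q ≤ ⊤)).ker) →+
        (X.D ⊤ ⧸ (X.j (le_top : p ≤ ⊤)).ker))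
      (τ : X.Sterm (bot_le : (⊥ : I) ≤ q) hqp (le_top : p ≤ ⊤) →+
        X.Sterm (bot_le : (⊥ : I) ≤ q) (le_top : q ≤ ⊤) (le_refl (⊤ : I))),
      (∀ (w : X.D ⊤)
        (hkw : X.j (le_top : q ≤ ⊤) w ∈ (X.dd (bot_le : (⊥ : I) ≤ q) le_top).ker),
        φq (QuotientAddGroup.mk w) =
          X.Scls (bot_le : (⊥ : I) ≤ q) (le_top : q ≤ ⊤) (le_refl (⊤ : I)) hkw) ∧
      Bijective φq ∧
      (∀ w : X.D ⊤, σ (QuotientAddGroup.mk w) = QuotientAddGroup.mk w) ∧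
      Surjective σ ∧
      (∀ (x : X.E p q hqp) (hx : x ∈ (X.dd (bot_le : (⊥ : I) ≤ q) hqp).ker)
        (hx' : X.l hqp (le_top : q ≤ ⊤) (le_top : p ≤ ⊤) le_rfl x ∈
          (X.dd (bot_le : (⊥ : I) ≤ q) (le_top : q ≤ ⊤)).ker),
        τ (X.Scls (bot_le : (⊥ : I) ≤ q) hqp (le_top : p ≤ ⊤) hx) =
          X.Scls (bot_le : (⊥ : I) ≤ q) (le_top : q ≤ ⊤) (le_refl (⊤ : I)) hx') ∧
      Injective τ ∧
      τ.range = σ.ker.map φq ∧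
      Nonempty (X.Sterm (bot_le : (⊥ : I) ≤ q) hqp (le_top : p ≤ ⊤) ≃+ ↥σ.ker) := by
  exact ⟨⟨(X.quotEquivS le_top).toAddMonoidHom, fun w _ => X.quotEquivS_mk le_top w,
      (X.quotEquivS le_top).bijective⟩,
    X.ker_j_le_ker_j hqp le_top,
    (X.quotEquivS le_top).toAddMonoidHom, X.quotMap hqp le_top, X.sIncl hqp le_top,
    fun w _ => X.quotEquivS_mk le_top w, (X.quotEquivS le_top).bijective,
    X.quotMap_mk hqp le_top, X.quotMap_surjective hqp le_top,
    fun _ => X.sIncl_Scls hqp le_top,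
    X.sIncl_injective hqp le_top, X.range_sIncl hqp le_top,
    AddMonoidHom.nonempty_addEquiv_of_range_eq_map (X.sIncl_injective hqp le_top)
      (X.quotEquivS le_top).injective (X.range_sIncl hqp le_top)⟩
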